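/- Every map of flows having the right lifting property with respect to all maps of I^gl ∪ {C} belongs to W̄_DK and has the right lifting property with respect to all maps of {C⁺, c₀⁺} ∪ J^gl ∪ I^gl_{≥1}; that is, inj(I^gl ∪ {C}) ⊆ W̄_DK ∩ inj({C⁺, c₀⁺} ∪ J^gl ∪ I^gl_{≥1}). -/

import Mathlib

open CategoryTheory

noncomputable section

/-! ### Flows: small semicategories enriched in topological spaces -/

structure DFlow : Type 1 where
  States : Type
  Path : States → States → Type
  str : ∀ α β, TopologicalSpace (Path α β)
  comp : ∀ {α β γ : States}, Path α β → Path β γ → Path α γ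
  continuous_comp : ∀ α β γ, Continuous (fun p : Path α β × Path β γ => comp p.1 p.2)
  assoc : ∀ {α β γ δ : States} (x : Path α β) (y : Path β γ) (z : Path γ δ),
    comp (comp x y) z = comp x (comp y z)

attribute [instance] DFlow.str

/-- Morphisms of flows. -/
structure FlowHom (X Y : DFlow) where
  toFun : X.States → Y.States
  map : ∀ {α β : X.States}, X.Path α β → Y.Path (toFun α) (toFun β)
  continuous_map : ∀ α β : X.States, Continuous fun p : X.Path α β => map p
  map_comp : ∀ {α β γ : X.States} (x : X.Path α β) (y : X.Path β γ),
    map (X.comp x y) = Y.comp (map x) (map y)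

instance : Category DFlow where
  Hom := FlowHom
  id X := ⟨id, fun p => p, fun _ _ => continuous_id, fun _ _ => rfl⟩
  comp f g := ⟨g.toFun ∘ f.toFun, fun p => g.map (f.map p),
    fun α β => (g.continuous_map _ _).comp (f.continuous_map _ _),
    fun x y => by simp only [f.map_comp, g.map_comp]⟩

lemma continuous_of_isEmpty {X Y : Type} [TopologicalSpace X] [TopologicalSpace Y]
    (h : IsEmpty X) (f : X → Y) : Continuous f :=
  continuous_iff_continuousAt.mpr fun x => h.elim x

/-- A set viewed as a flow with empty spaces of execution paths. -/
def DFlow.ofSet (S : Type) : DFlow where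
  States := S
  Path _ _ := Empty
  str _ _ := ⊥
  comp x _ := x.elim
  continuous_comp _ _ _ := continuous_of_isEmpty (inferInstanceAs (IsEmpty (Empty × Empty))) _
  assoc x _ _ := x.elim

/-- The empty flow. -/
def emptyFlow : DFlow := DFlow.ofSet Empty

/-- The flow `{0}` with one state and no execution path. -/
def pointFlow : DFlow := DFlow.ofSet PUnit

/-- The flow `{0, 1}` with two states and no execution path. -/
def twoFlow : DFlow := DFlow.ofSet Bool

/-- The terminal flow. -/
def terminalFlow : DFlow where
  States := PUnit
  Path _ _ := PUnit
  str _ _ := ⊥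
  comp _ _ := PUnit.unit
  continuous_comp _ _ _ := continuous_const
  assoc _ _ _ := rfl

/-- The map of flows `C : ∅ → {0}`. -/
def Cmap : emptyFlow ⟶ pointFlow :=
  ⟨fun x => x.elim, fun {α} _ _ => α.elim, fun α _ => α.elim, fun {α} _ _ _ _ => α.elim⟩

/-- The map of flows `R : {0,1} → {0}`. -/
def Rmap : twoFlow ⟶ pointFlow :=
  ⟨fun _ => PUnit.unit, fun p => p.elim, fun _ _ => @continuous_of_isEmpty _ _ (DFlow.str _ _ _) (DFlow.str _ _ _) (inferInstanceAs (IsEmpty Empty)) _, fun x _ => x.elim⟩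

/-- The map of flows `C⁺ : {0} → {0,1}`. -/
def Cplus : pointFlow ⟶ twoFlow :=
  ⟨fun _ => false, fun p => p.elim, fun _ _ => @continuous_of_isEmpty _ _ (DFlow.str _ _ _) (DFlow.str _ _ _) (inferInstanceAs (IsEmpty Empty)) _, fun x _ => x.elim⟩

/-- The canonical map from the empty flow. -/
def DFlow.fromEmpty (X : DFlow) : emptyFlow ⟶ X :=
  ⟨fun x => x.elim, fun {α} _ => α.elim, fun α _ => α.elim, fun {α} _ _ _ _ => α.elim⟩

/-- The canonical map to the terminal flow. -/
def DFlow.toTerminal (X : DFlow) : X ⟶ terminalFlow :=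
  ⟨fun _ => PUnit.unit, fun _ => PUnit.unit, fun α β => @continuous_const (X.Path α β) (terminalFlow.Path PUnit.unit PUnit.unit) (X.str α β) (terminalFlow.str PUnit.unit PUnit.unit) PUnit.unit, fun _ _ => rfl⟩

/-! ### Globes -/

/-- The path spaces of the globe `Glob(Z)`. -/
def GlobPath (Z : Type) : Bool → Bool → Type
  | false, true => Z
  | _, _ => Empty

instance globPathTop (Z : Type) [TopologicalSpace Z] :
    ∀ a b, TopologicalSpace (GlobPath Z a b)
  | false, true => inferInstanceAs (TopologicalSpace Z)
  | false, false => ⊥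
  | true, false => ⊥
  | true, true => ⊥

instance globPathIsEmpty (Z : Type) : ∀ (a : Bool), IsEmpty (GlobPath Z a a)
  | false => inferInstanceAs (IsEmpty Empty)
  | true => inferInstanceAs (IsEmpty Empty)

/-- The globe of a topological space. -/
def DFlow.glob (Z : Type) [TopologicalSpace Z] : DFlow where
  States := Bool
  Path := GlobPath Z
  str := globPathTop Z
  comp {a b c} x y :=
    match a, b, c, x, y with
    | false, false, _, x, _ => x.elim
    | false, true, false, _, y => y.elim
    | false, true, true, _, y => y.elim
    | true, false, _, x, _ => x.elim
    | true, true, _, x, _ => x.elim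
  continuous_comp a b c :=
    match a, b, c with
    | false, false, false => continuous_of_isEmpty ⟨fun p => p.1.elim⟩ _
    | false, false, true => continuous_of_isEmpty ⟨fun p => p.1.elim⟩ _
    | false, true, false => continuous_of_isEmpty ⟨fun p => p.2.elim⟩ _
    | false, true, true => continuous_of_isEmpty ⟨fun p => p.2.elim⟩ _
    | true, false, false => continuous_of_isEmpty ⟨fun p => p.1.elim⟩ _
    | true, false, true => continuous_of_isEmpty ⟨fun p => p.1.elim⟩ _
    | true, true, false => continuous_of_isEmpty ⟨fun p => p.1.elim⟩ _
    | true, true, true => continuous_of_isEmpty ⟨fun p => p.1.elim⟩ _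
  assoc {a b c d} x y z :=
    match a, b, c, d, x, y, z with
    | false, false, _, _, x, _, _ => x.elim
    | false, true, false, _, _, y, _ => y.elim
    | false, true, true, false, _, y, _ => y.elim
    | false, true, true, true, _, y, _ => y.elim
    | true, _, _, _, x, _, _ => x.elim

/-- The functorial action of `Glob` on a continuous map. -/
def DFlow.globMap {Z W : Type} [TopologicalSpace Z] [TopologicalSpace W] (f : Z → W)
    (hf : Continuous f) : DFlow.glob Z ⟶ DFlow.glob W where
  toFun := id
  map {a b} x :=
    match a, b, x with
    | false, true, x => f x
    | false, false, x => x.elim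
    | true, false, x => x.elim
    | true, true, x => x.elim
  continuous_map a b :=
    match a, b with
    | false, true => hf
    | false, false => @continuous_of_isEmpty _ _ (DFlow.str _ _ _) (DFlow.str _ _ _) (inferInstanceAs (IsEmpty Empty)) _
    | true, false => @continuous_of_isEmpty _ _ (DFlow.str _ _ _) (DFlow.str _ _ _) (inferInstanceAs (IsEmpty Empty)) _
    | true, true => @continuous_of_isEmpty _ _ (DFlow.str _ _ _) (DFlow.str _ _ _) (inferInstanceAs (IsEmpty Empty)) _
  map_comp {a b c} x y :=
    match a, b, c, x, y with
    | false, false, _, x, _ => x.elim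
    | false, true, false, _, y => y.elim
    | false, true, true, _, y => y.elim
    | true, _, _, x, _ => x.elim

/-- The directed segment, the globe of a one-point space. -/
def Iseg : DFlow := DFlow.glob PUnit

/-! ### Disks and spheres -/

/-- The `n`-dimensional disk `D^n`. -/
def gDisk (n : ℕ) : Type := (Metric.closedBall (0 : EuclideanSpace ℝ (Fin n)) 1 : Set _)

/-- The sphere `S^{n-1}`, boundary of the `n`-dimensional disk. -/
def gSphere (n : ℕ) : Type := (Metric.sphere (0 : EuclideanSpace ℝ (Fin n)) 1 : Set _)

instance (n : ℕ) : TopologicalSpace (gDisk n) :=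
  inferInstanceAs (TopologicalSpace (Metric.closedBall (0 : EuclideanSpace ℝ (Fin n)) 1))

instance (n : ℕ) : TopologicalSpace (gSphere n) :=
  inferInstanceAs (TopologicalSpace (Metric.sphere (0 : EuclideanSpace ℝ (Fin n)) 1))

/-- The inclusion `S^{n-1} ⊆ D^n`. -/
def sphereIncl (n : ℕ) : gSphere n → gDisk n :=
  fun x => ⟨x.1, Metric.sphere_subset_closedBall x.2⟩

lemma continuous_sphereIncl (n : ℕ) : Continuous (sphereIncl n) :=
  Continuous.subtype_mk continuous_subtype_val _

/-- The generating cofibration `c_n : Glob(S^{n-1}) → Glob(D^n)`. -/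
def cFlow (n : ℕ) : DFlow.glob (gSphere n) ⟶ DFlow.glob (gDisk n) :=
  DFlow.globMap (sphereIncl n) (continuous_sphereIncl n)

/-- `{0}` as a subspace of `ℝ`. -/
def zeroSpace : Type := ({(0 : ℝ)} : Set ℝ)

instance : TopologicalSpace zeroSpace := inferInstanceAs (TopologicalSpace ({(0:ℝ)} : Set ℝ))

/-- The inclusion `D^n × {0} → D^n × [0,1]`. -/
def cylIncl (n : ℕ) : gDisk n × zeroSpace → gDisk n × unitInterval :=
  fun p => (p.1, ⟨p.2.1, by
    rcases p.2 with ⟨x, hx⟩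
    simp only [Set.mem_singleton_iff] at hx
    subst hx
    exact unitInterval.zero_mem⟩)

lemma continuous_cylIncl (n : ℕ) : Continuous (cylIncl n) :=
  continuous_fst.prodMk (Continuous.subtype_mk (continuous_subtype_val.comp continuous_snd) _)

/-- The generating trivial cofibration `Glob(D^n × {0}) → Glob(D^n × [0,1])`. -/
def jFlow (n : ℕ) : DFlow.glob (gDisk n × zeroSpace) ⟶ DFlow.glob (gDisk n × unitInterval) :=
  DFlow.globMap (cylIncl n) (continuous_cylIncl n)

/-! ### Generating sets of maps, as morphism properties -/

/-- The set `I^gl = {c_n : Glob(S^{n-1}) → Glob(D^n) | n ≥ 0}`. -/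
def Igl : MorphismProperty DFlow := fun X Y f =>
  ∃ n : ℕ, X = DFlow.glob (gSphere n) ∧ Y = DFlow.glob (gDisk n) ∧ HEq f (cFlow n)

/-- The set `I^gl_{≥1} = {c_n | n ≥ 1}`. -/
def IglGeOne : MorphismProperty DFlow := fun X Y f =>
  ∃ n : ℕ, 1 ≤ n ∧ X = DFlow.glob (gSphere n) ∧ Y = DFlow.glob (gDisk n) ∧ HEq f (cFlow n)

/-- The set `J^gl`. -/
def Jgl : MorphismProperty DFlow := fun X Y f =>
  ∃ n : ℕ, X = DFlow.glob (gDisk n × zeroSpace) ∧ Y = DFlow.glob (gDisk n × unitInterval) ∧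
    HEq f (jFlow n)

/-- The singleton `{C}`. -/
def Cprop : MorphismProperty DFlow := fun X Y f =>
  X = emptyFlow ∧ Y = pointFlow ∧ HEq f Cmap

/-- The singleton `{R}`. -/
def Rprop : MorphismProperty DFlow := fun X Y f =>
  X = twoFlow ∧ Y = pointFlow ∧ HEq f Rmap

/-- The set `I^gl ∪ {C}`. -/
def IglC : MorphismProperty DFlow := fun _ _ f => Igl f ∨ Cprop f

/-- The set `I^gl ∪ {C, R}`, generating cofibrations of the q-model structure. -/
def IglCR : MorphismProperty DFlow := fun _ _ f => Igl f ∨ Cprop f ∨ Rprop f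

/-! ### Lifting properties, cofibration and injectivity classes -/

/-- `rlpClass S` is `inj(S)`: maps with the RLP with respect to every map of `S`. -/
def rlpClass {M : Type _} [Category M] (S : MorphismProperty M) : MorphismProperty M :=
  fun _ _ p => ∀ {A B : M} (i : A ⟶ B), S i → HasLiftingProperty i p

/-- `llpClass S`: maps with the LLP with respect to every map of `S`. -/
def llpClass {M : Type _} [Category M] (S : MorphismProperty M) : MorphismProperty M :=
  fun _ _ i => ∀ {A B : M} (p : A ⟶ B), S p → HasLiftingProperty i p

/-- `cofClass S` is `cof(S) = llp(inj(S))`. -/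
def cofClass {M : Type _} [Category M] (S : MorphismProperty M) : MorphismProperty M :=
  llpClass (rlpClass S)

/-! ### Model structures -/

/-- A model structure on a category, specified by its weak equivalences,
cofibrations and fibrations. -/
structure ModelStructure (M : Type _) [Category M] where
  W : MorphismProperty M
  C : MorphismProperty M
  F : MorphismProperty M
  w_comp : ∀ {X Y Z : M} (f : X ⟶ Y) (g : Y ⟶ Z), W f → W g → W (f ≫ g)
  w_cancel_left : ∀ {X Y Z : M} (f : X ⟶ Y) (g : Y ⟶ Z), W f → W (f ≫ g) → W g
  w_cancel_right : ∀ {X Y Z : M} (f : X ⟶ Y) (g : Y ⟶ Z), W g → W (f ≫ g) → W f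
  w_retract : ∀ {X Y X' Y' : M} (f : X ⟶ Y) (g : X' ⟶ Y') (iX : X ⟶ X') (rX : X' ⟶ X)
    (iY : Y ⟶ Y') (rY : Y' ⟶ Y), iX ≫ rX = 𝟙 X → iY ≫ rY = 𝟙 Y →
    iX ≫ g = f ≫ iY → g ≫ rY = rX ≫ f → W g → W f
  cof_eq : C = llpClass (fun _ _ p => F p ∧ W p)
  fib_eq : F = rlpClass (fun _ _ i => C i ∧ W i)
  factor_triv_cof : ∀ {X Y : M} (f : X ⟶ Y),
    ∃ (Z : M) (i : X ⟶ Z) (p : Z ⟶ Y), C i ∧ W i ∧ F p ∧ i ≫ p = f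
  factor_triv_fib : ∀ {X Y : M} (f : X ⟶ Y),
    ∃ (Z : M) (i : X ⟶ Z) (p : Z ⟶ Y), C i ∧ F p ∧ W p ∧ i ≫ p = f

/-! ### The class of weak equivalences `W̄_DK` -/

/-- A flow "is a set": it has no execution path. -/
def DFlow.IsSetFlow (X : DFlow) : Prop := ∀ α β : X.States, IsEmpty (X.Path α β)

/-- A flow has at least one execution path. -/
def DFlow.HasExecPath (X : DFlow) : Prop := ∃ α β : X.States, Nonempty (X.Path α β)

/-- The class `W̄_DK` of maps of flows. -/
def WbarDK : MorphismProperty DFlow := fun X Y _ =>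
  (IsEmpty X.States ∧ IsEmpty Y.States) ∨
  (Nonempty X.States ∧ Nonempty Y.States ∧ X.IsSetFlow ∧ Y.IsSetFlow) ∨
  (X.HasExecPath ∧ Y.HasExecPath)

/-! ### Binary coproducts of flows -/

/-- Path spaces of the coproduct of two flows. -/
def SumPath (X Y : DFlow) : X.States ⊕ Y.States → X.States ⊕ Y.States → Type
  | .inl a, .inl b => X.Path a b
  | .inr a, .inr b => Y.Path a b
  | _, _ => Empty

instance sumPathTop (X Y : DFlow) : ∀ a b, TopologicalSpace (SumPath X Y a b)
  | .inl a, .inl b => inferInstanceAs (TopologicalSpace (X.Path a b))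
  | .inr a, .inr b => inferInstanceAs (TopologicalSpace (Y.Path a b))
  | .inl _, .inr _ => ⊥
  | .inr _, .inl _ => ⊥

/-- The coproduct of two flows. -/
def DFlow.sum (X Y : DFlow) : DFlow where
  States := X.States ⊕ Y.States
  Path := SumPath X Y
  str := sumPathTop X Y
  comp {a b c} x y :=
    match a, b, c, x, y with
    | .inl _, .inl _, .inl _, x, y => X.comp x y
    | .inr _, .inr _, .inr _, x, y => Y.comp x y
    | .inl _, .inl _, .inr _, _, y => y.elim
    | .inl _, .inr _, _, x, _ => x.elim
    | .inr _, .inl _, _, x, _ => x.elim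
    | .inr _, .inr _, .inl _, _, y => y.elim
  continuous_comp a b c :=
    match a, b, c with
    | .inl _, .inl _, .inl _ => X.continuous_comp _ _ _
    | .inr _, .inr _, .inr _ => Y.continuous_comp _ _ _
    | .inl _, .inl _, .inr _ => continuous_of_isEmpty ⟨fun p => p.2.elim⟩ _
    | .inl _, .inr _, _ => continuous_of_isEmpty ⟨fun p => p.1.elim⟩ _
    | .inr _, .inl _, _ => continuous_of_isEmpty ⟨fun p => p.1.elim⟩ _
    | .inr _, .inr _, .inl _ => continuous_of_isEmpty ⟨fun p => p.2.elim⟩ _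
  assoc {a b c d} x y z :=
    match a, b, c, d, x, y, z with
    | .inl _, .inl _, .inl _, .inl _, x, y, z => X.assoc x y z
    | .inr _, .inr _, .inr _, .inr _, x, y, z => Y.assoc x y z
    | .inl _, .inl _, .inl _, .inr _, _, _, z => z.elim
    | .inl _, .inl _, .inr _, _, _, y, _ => y.elim
    | .inl _, .inr _, _, _, x, _, _ => x.elim
    | .inr _, .inl _, _, _, x, _, _ => x.elim
    | .inr _, .inr _, .inl _, _, _, y, _ => y.elim
    | .inr _, .inr _, .inr _, .inl _, _, _, z => z.elim

/-- The coproduct of two maps of flows. -/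
def DFlow.sumMap {X X' Y Y' : DFlow} (f : X ⟶ X') (g : Y ⟶ Y') : X.sum Y ⟶ X'.sum Y' where
  toFun := Sum.map f.toFun g.toFun
  map {a b} x :=
    match a, b, x with
    | .inl _, .inl _, x => f.map x
    | .inr _, .inr _, x => g.map x
    | .inl _, .inr _, x => x.elim
    | .inr _, .inl _, x => x.elim
  continuous_map a b :=
    match a, b with
    | .inl _, .inl _ => f.continuous_map _ _
    | .inr _, .inr _ => g.continuous_map _ _
    | .inl _, .inr _ => @continuous_of_isEmpty _ _ (DFlow.str _ _ _) (DFlow.str _ _ _) (inferInstanceAs (IsEmpty Empty)) _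
    | .inr _, .inl _ => @continuous_of_isEmpty _ _ (DFlow.str _ _ _) (DFlow.str _ _ _) (inferInstanceAs (IsEmpty Empty)) _
  map_comp {a b c} x y :=
    match a, b, c, x, y with
    | .inl _, .inl _, .inl _, x, y => f.map_comp x y
    | .inr _, .inr _, .inr _, x, y => g.map_comp x y
    | .inl _, .inl _, .inr _, _, y => y.elim
    | .inl _, .inr _, _, x, _ => x.elim
    | .inr _, .inl _, _, x, _ => x.elim
    | .inr _, .inr _, .inl _, _, y => y.elim

/-- The map `c₀⁺ = id_{I⃗} ⊔ c₀ : I⃗ ⊔ Glob(S^{-1}) → I⃗ ⊔ Glob(D⁰)`. -/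
def cZeroPlus : Iseg.sum (DFlow.glob (gSphere 0)) ⟶ Iseg.sum (DFlow.glob (gDisk 0)) :=
  DFlow.sumMap (𝟙 Iseg) (cFlow 0)

/-- The singleton `{C⁺}`. -/
def CplusProp : MorphismProperty DFlow := fun X Y f =>
  X = pointFlow ∧ Y = twoFlow ∧ HEq f Cplus

/-- The singleton `{c₀⁺}`. -/
def cZeroPlusProp : MorphismProperty DFlow := fun X Y f =>
  X = Iseg.sum (DFlow.glob (gSphere 0)) ∧ Y = Iseg.sum (DFlow.glob (gDisk 0)) ∧ HEq f cZeroPlus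

/-- The set `{C⁺, c₀⁺} ∪ J^gl ∪ I^gl_{≥1}`. -/
def TrivCofGen : MorphismProperty DFlow := fun _ _ f =>
  CplusProp f ∨ cZeroPlusProp f ∨ Jgl f ∨ IglGeOne f

/-!
Lifting against `C` makes `f` surjective on states, and lifting against
`c₀ : Glob(∅) → Glob(pt)` makes it surjective on every space of execution paths; this gives
`W̄_DK` and the lift against `C⁺`. The map `c₀⁺` is the coproduct of `c₀` with an identity, and
left lifting properties are stable under coproducts. Finally, `Dⁿ × {0} ⊂ Dⁿ × [0,1]` is a
retract of `Sⁿ ⊂ Dⁿ⁺¹` (map the disk onto the lower hemisphere and the cylinder onto the lower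
half of the shell `1/2 ≤ ‖z‖ ≤ 1`), so applying `Glob` exhibits each map of `J^gl` as a retract
of a map of `I^gl`.
-/

namespace FlowHom

variable {X Y : DFlow}

lemma hext {h k : X ⟶ Y} (h_toFun : ∀ s, h.toFun s = k.toFun s)
    (h_map : ∀ (a b : X.States) (p : X.Path a b), HEq (h.map p) (k.map p)) : h = k := by
  obtain ⟨t, m, _, _⟩ := h
  obtain ⟨t', m', _, _⟩ := k
  obtain rfl : t = t' := funext h_toFun
  obtain rfl : @m = @m' := funext fun a => funext fun b => funext fun p => eq_of_heq (h_map a b p)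
  rfl

lemma congr_toFun {h k : X ⟶ Y} (e : h = k) (s : X.States) : h.toFun s = k.toFun s := by
  rw [e]

lemma congr_map {h k : X ⟶ Y} (e : h = k) {a b : X.States} (p : X.Path a b) :
    HEq (h.map p) (k.map p) := by
  subst e; rfl

end FlowHom

namespace DFlow

lemma continuous_of_isEmpty_path {X Y : DFlow} {a b : X.States} {c d : Y.States}
    (h : IsEmpty (X.Path a b)) (f : X.Path a b → Y.Path c d) : Continuous f :=
  continuous_of_isEmpty h f

def ofSetHom {S : Type} {X : DFlow} (g : S → X.States) : ofSet S ⟶ X :=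
  ⟨g, fun p => p.elim, fun _ _ => continuous_of_isEmpty_path (inferInstanceAs (IsEmpty Empty)) _,
    fun p _ => p.elim⟩

lemma ofSet_hom_ext {S : Type} {X : DFlow} {h k : ofSet S ⟶ X}
    (e : ∀ s, h.toFun s = k.toFun s) : h = k :=
  FlowHom.hext e fun _ _ p => p.elim

section Glob

variable {Z W V : Type} [TopologicalSpace Z] [TopologicalSpace W] [TopologicalSpace V]

lemma glob_hom_ext {X : DFlow} {h k : glob Z ⟶ X} (e : ∀ s, h.toFun s = k.toFun s)
    (e' : ∀ z : Z, HEq (h.map (α := false) (β := true) z) (k.map (α := false) (β := true) z)) :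
    h = k :=
  FlowHom.hext e fun a b p =>
    match a, b, p with
    | false, true, z => e' z
    | false, false, p => p.elim
    | true, false, p => p.elim
    | true, true, p => p.elim

lemma globMap_id : globMap (id : Z → Z) continuous_id = 𝟙 (glob Z) :=
  glob_hom_ext (fun _ => rfl) fun _ => HEq.rfl

lemma globMap_comp {g : Z → W} {g' : W → V} (hg : Continuous g) (hg' : Continuous g') :
    globMap g hg ≫ globMap g' hg' = globMap (g' ∘ g) (hg'.comp hg) :=
  glob_hom_ext (fun _ => rfl) fun _ => HEq.rfl

def globFunctor : TopCat.{0} ⥤ DFlow where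
  obj Z := glob Z
  map g := globMap g g.hom.continuous
  map_id _ := globMap_id
  map_comp g g' := (globMap_comp g.hom.continuous g'.hom.continuous).symm

def globHom {X : DFlow} (a b : X.States) (φ : Z → X.Path a b) (hφ : Continuous φ) :
    glob Z ⟶ X where
  toFun s := cond s b a
  map {α β} p :=
    match α, β, p with
    | false, true, z => φ z
    | false, false, p => p.elim
    | true, false, p => p.elim
    | true, true, p => p.elim
  continuous_map α β :=
    match α, β with
    | false, true => hφ
    | false, false => continuous_of_isEmpty_path (inferInstanceAs (IsEmpty Empty)) _
    | true, false => continuous_of_isEmpty_path (inferInstanceAs (IsEmpty Empty)) _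
    | true, true => continuous_of_isEmpty_path (inferInstanceAs (IsEmpty Empty)) _
  map_comp {α β γ} x y :=
    match α, β, γ, x, y with
    | false, false, _, x, _ => x.elim
    | false, true, false, _, y => y.elim
    | false, true, true, _, y => y.elim
    | true, _, _, x, _ => x.elim

end Glob

section Sum

variable {X Y Z : DFlow}

def sumInl (X Y : DFlow) : X ⟶ X.sum Y :=
  ⟨Sum.inl, fun p => p, fun _ _ => continuous_id, fun _ _ => rfl⟩

def sumInr (X Y : DFlow) : Y ⟶ X.sum Y :=
  ⟨Sum.inr, fun p => p, fun _ _ => continuous_id, fun _ _ => rfl⟩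

def sumDesc (g : X ⟶ Z) (h : Y ⟶ Z) : X.sum Y ⟶ Z where
  toFun := Sum.elim g.toFun h.toFun
  map {a b} p :=
    match a, b, p with
    | .inl _, .inl _, p => g.map p
    | .inr _, .inr _, p => h.map p
    | .inl _, .inr _, p => p.elim
    | .inr _, .inl _, p => p.elim
  continuous_map a b :=
    match a, b with
    | .inl _, .inl _ => g.continuous_map _ _
    | .inr _, .inr _ => h.continuous_map _ _
    | .inl _, .inr _ => continuous_of_isEmpty_path (inferInstanceAs (IsEmpty Empty)) _
    | .inr _, .inl _ => continuous_of_isEmpty_path (inferInstanceAs (IsEmpty Empty)) _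
  map_comp {a b c} x y :=
    match a, b, c, x, y with
    | .inl _, .inl _, .inl _, x, y => g.map_comp x y
    | .inr _, .inr _, .inr _, x, y => h.map_comp x y
    | .inl _, .inl _, .inr _, _, y => y.elim
    | .inl _, .inr _, _, x, _ => x.elim
    | .inr _, .inl _, _, x, _ => x.elim
    | .inr _, .inr _, .inl _, _, y => y.elim

@[simp]
lemma sumInl_sumDesc (g : X ⟶ Z) (h : Y ⟶ Z) : sumInl X Y ≫ sumDesc g h = g := rfl

@[simp]
lemma sumInr_sumDesc (g : X ⟶ Z) (h : Y ⟶ Z) : sumInr X Y ≫ sumDesc g h = h := rfl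

@[simp]
lemma sumInl_sumMap {X' Y' : DFlow} (g : X ⟶ X') (h : Y ⟶ Y') :
    sumInl X Y ≫ sumMap g h = g ≫ sumInl X' Y' := rfl

@[simp]
lemma sumInr_sumMap {X' Y' : DFlow} (g : X ⟶ X') (h : Y ⟶ Y') :
    sumInr X Y ≫ sumMap g h = h ≫ sumInr X' Y' := rfl

lemma sum_hom_ext {h k : X.sum Y ⟶ Z} (hl : sumInl X Y ≫ h = sumInl X Y ≫ k)
    (hr : sumInr X Y ≫ h = sumInr X Y ≫ k) : h = k :=
  FlowHom.hext
    (fun s =>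
      match s with
      | .inl x => FlowHom.congr_toFun hl x
      | .inr y => FlowHom.congr_toFun hr y)
    (fun a b p =>
      match a, b, p with
      | .inl _, .inl _, p => FlowHom.congr_map hl p
      | .inr _, .inr _, p => FlowHom.congr_map hr p
      | .inl _, .inr _, p => p.elim
      | .inr _, .inl _, p => p.elim)

instance hasLiftingProperty_sumMap {A B A' B' : DFlow} (i : A ⟶ B) (i' : A' ⟶ B')
    (p : X ⟶ Y) [HasLiftingProperty i p] [HasLiftingProperty i' p] :
    HasLiftingProperty (sumMap i i') p where
  sq_hasLift {top bot} sq := by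
    have sq_l : CommSq (sumInl A A' ≫ top) i p (sumInl B B' ≫ bot) :=
      ⟨by rw [Category.assoc, sq.w, ← Category.assoc, sumInl_sumMap, Category.assoc]⟩
    have sq_r : CommSq (sumInr A A' ≫ top) i' p (sumInr B B' ≫ bot) :=
      ⟨by rw [Category.assoc, sq.w, ← Category.assoc, sumInr_sumMap, Category.assoc]⟩
    exact ⟨⟨{ l := sumDesc sq_l.lift sq_r.lift
              fac_left := sum_hom_ext
                (by rw [← Category.assoc, sumInl_sumMap, Category.assoc, sumInl_sumDesc,
                  sq_l.fac_left])
                (by rw [← Category.assoc, sumInr_sumMap, Category.assoc, sumInr_sumDesc,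
                  sq_r.fac_left])
              fac_right := sum_hom_ext
                (by rw [← Category.assoc, sumInl_sumDesc, sq_l.fac_right])
                (by rw [← Category.assoc, sumInr_sumDesc, sq_r.fac_right]) }⟩⟩

end Sum

end DFlow

namespace EuclideanSpace

variable {n : ℕ}

def snoc (x : EuclideanSpace ℝ (Fin n)) (t : ℝ) : EuclideanSpace ℝ (Fin (n + 1)) :=
  WithLp.toLp 2 (Fin.snoc (α := fun _ => ℝ) x.ofLp t)

def init (z : EuclideanSpace ℝ (Fin (n + 1))) : EuclideanSpace ℝ (Fin n) :=
  WithLp.toLp 2 (Fin.init z.ofLp)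

@[simp]
lemma init_snoc (x : EuclideanSpace ℝ (Fin n)) (t : ℝ) : init (snoc x t) = x := by
  simp [init, snoc]

lemma init_smul (c : ℝ) (z : EuclideanSpace ℝ (Fin (n + 1))) : init (c • z) = c • init z := rfl

lemma norm_snoc_sq (x : EuclideanSpace ℝ (Fin n)) (t : ℝ) : ‖snoc x t‖ ^ 2 = ‖x‖ ^ 2 + t ^ 2 := by
  simp [EuclideanSpace.real_norm_sq_eq, Fin.sum_univ_castSucc, snoc]

lemma norm_init_le (z : EuclideanSpace ℝ (Fin (n + 1))) : ‖init z‖ ≤ ‖z‖ := by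
  rw [← sq_le_sq₀ (norm_nonneg _) (norm_nonneg _), EuclideanSpace.real_norm_sq_eq,
    EuclideanSpace.real_norm_sq_eq, Fin.sum_univ_castSucc]
  simp only [init, PiLp.toLp_apply, Fin.init]
  nlinarith [sq_nonneg (z (Fin.last n))]

lemma continuous_snoc : Continuous fun p : EuclideanSpace ℝ (Fin n) × ℝ => snoc p.1 p.2 :=
  (PiLp.continuous_toLp 2 _).comp <|
    ((PiLp.continuous_ofLp 2 fun _ : Fin n => ℝ).comp continuous_fst).finSnoc
      (A := fun _ => ℝ) continuous_snd

lemma continuous_init : Continuous (init (n := n)) :=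
  (PiLp.continuous_toLp 2 _).comp (PiLp.continuous_ofLp 2 _).finInit

end EuclideanSpace

section CylinderRetract

open EuclideanSpace

variable {n : ℕ}

lemma norm_le_one_of_gDisk (x : gDisk n) : ‖x.1‖ ≤ 1 :=
  mem_closedBall_zero_iff.mp x.2

lemma norm_eq_one_of_gSphere (z : gSphere n) : ‖z.1‖ = 1 :=
  mem_sphere_zero_iff_norm.mp z.2

def hemisphere (x : gDisk n) : EuclideanSpace ℝ (Fin (n + 1)) :=
  snoc x.1 (-√(1 - ‖x.1‖ ^ 2))

lemma norm_hemisphere (x : gDisk n) : ‖hemisphere x‖ = 1 := by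
  have hx : ‖x.1‖ ^ 2 ≤ 1 := pow_le_one₀ (norm_nonneg _) (norm_le_one_of_gDisk x)
  rw [← sq_eq_sq₀ (norm_nonneg _) zero_le_one, one_pow, hemisphere, norm_snoc_sq, neg_sq,
    Real.sq_sqrt (sub_nonneg.mpr hx), add_sub_cancel]

lemma continuous_hemisphere : Continuous (hemisphere (n := n)) :=
  continuous_snoc.comp <| continuous_subtype_val.prodMk <|
    (continuous_const.sub (continuous_subtype_val.norm.pow 2)).sqrt.neg

def hemisphereMap (n : ℕ) : C(gDisk n × zeroSpace, gSphere (n + 1)) where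
  toFun p := ⟨hemisphere p.1, mem_sphere_zero_iff_norm.mpr (norm_hemisphere p.1)⟩
  continuous_toFun := (continuous_hemisphere.comp continuous_fst).subtype_mk _

def sphereProj (n : ℕ) : C(gSphere (n + 1), gDisk n × zeroSpace) where
  toFun z := (⟨init z.1, mem_closedBall_zero_iff.mpr
    ((norm_init_le z.1).trans (norm_eq_one_of_gSphere z).le)⟩, ⟨0, rfl⟩)
  continuous_toFun :=
    ((continuous_init.comp continuous_subtype_val).subtype_mk _).prodMk continuous_const

def cylinderEmbedding (n : ℕ) : C(gDisk n × unitInterval, gDisk (n + 1)) where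
  toFun p := ⟨(1 - p.2.1 / 2) • hemisphere p.1, by
    obtain ⟨h0, h1⟩ := p.2.2
    rw [mem_closedBall_zero_iff, norm_smul, norm_hemisphere, mul_one, Real.norm_eq_abs,
      abs_of_nonneg (by linarith)]
    linarith⟩
  continuous_toFun := Continuous.subtype_mk
    ((continuous_const.sub ((continuous_subtype_val.comp continuous_snd).div_const 2)).smul
      (continuous_hemisphere.comp continuous_fst)) _

/-- Dividing by `max ‖z‖ (1/2)` rather than `‖z‖` keeps this continuous at the centre while
still inverting `cylinderEmbedding` on its image, where `‖z‖ ≥ 1/2`. -/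
def cylinderRetraction (n : ℕ) : C(gDisk (n + 1), gDisk n × unitInterval) where
  toFun z := (⟨(max ‖z.1‖ (1 / 2))⁻¹ • init z.1, by
      rw [mem_closedBall_zero_iff, norm_smul, norm_inv, Real.norm_of_nonneg (by positivity),
        inv_mul_le_one₀ (by positivity)]
      exact (norm_init_le z.1).trans (le_max_left _ _)⟩,
    Set.projIcc 0 1 zero_le_one (2 * (1 - ‖z.1‖)))
  continuous_toFun := by
    refine Continuous.prodMk (Continuous.subtype_mk ?_ _) ?_
    · exact ((continuous_subtype_val.norm.max continuous_const).inv₀ fun z =>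
        (lt_max_of_lt_right one_half_pos).ne').smul (continuous_init.comp continuous_subtype_val)
    · exact continuous_projIcc.comp
        (continuous_const.mul (continuous_const.sub continuous_subtype_val.norm))

@[simp]
lemma hemisphereMap_apply_coe (p : gDisk n × zeroSpace) :
    (hemisphereMap n p).1 = hemisphere p.1 := rfl

@[simp]
lemma sphereProj_apply_fst_coe (z : gSphere (n + 1)) : (sphereProj n z).1.1 = init z.1 := rfl

@[simp]
lemma cylinderEmbedding_apply_coe (p : gDisk n × unitInterval) :
    (cylinderEmbedding n p).1 = (1 - p.2.1 / 2) • hemisphere p.1 := rfl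

@[simp]
lemma cylinderRetraction_apply_fst_coe (z : gDisk (n + 1)) :
    (cylinderRetraction n z).1.1 = (max ‖z.1‖ (1 / 2))⁻¹ • init z.1 := rfl

@[simp]
lemma cylinderRetraction_apply_snd (z : gDisk (n + 1)) :
    (cylinderRetraction n z).2 = Set.projIcc 0 1 zero_le_one (2 * (1 - ‖z.1‖)) := rfl

lemma sphereProj_hemisphereMap (p : gDisk n × zeroSpace) :
    sphereProj n (hemisphereMap n p) = p := by
  obtain ⟨x, ⟨t, rfl⟩⟩ := p
  refine Prod.ext (Subtype.ext ?_) rfl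
  simp [hemisphere]

lemma cylinderRetraction_cylinderEmbedding (p : gDisk n × unitInterval) :
    cylinderRetraction n (cylinderEmbedding n p) = p := by
  obtain ⟨x, t, ht0, ht1⟩ := p
  have hnorm : ‖(1 - t / 2) • hemisphere x‖ = 1 - t / 2 := by
    rw [norm_smul, norm_hemisphere, mul_one, Real.norm_of_nonneg (by linarith)]
  refine Prod.ext (Subtype.ext ?_) (Subtype.ext ?_)
  · rw [cylinderRetraction_apply_fst_coe, cylinderEmbedding_apply_coe, hnorm,
      max_eq_left (by linarith), init_smul, smul_smul, inv_mul_cancel₀ (by linarith), one_smul,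
      hemisphere, init_snoc]
  · rw [cylinderRetraction_apply_snd, cylinderEmbedding_apply_coe, hnorm,
      show 2 * (1 - (1 - t / 2)) = t by ring, Set.projIcc_of_mem _ ⟨ht0, ht1⟩]

lemma cylinderEmbedding_cylIncl (p : gDisk n × zeroSpace) :
    cylinderEmbedding n (cylIncl n p) = sphereIncl (n + 1) (hemisphereMap n p) := by
  obtain ⟨x, ⟨t, rfl⟩⟩ := p
  apply Subtype.ext
  rw [cylinderEmbedding_apply_coe]
  simp [cylIncl, sphereIncl]

lemma cylinderRetraction_sphereIncl (z : gSphere (n + 1)) :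
    cylinderRetraction n (sphereIncl (n + 1) z) = cylIncl n (sphereProj n z) := by
  have hz := norm_eq_one_of_gSphere z
  refine Prod.ext (Subtype.ext ?_) (Subtype.ext ?_)
  · rw [cylinderRetraction_apply_fst_coe]
    simp [cylIncl, sphereIncl, hz, show (2 : ℝ)⁻¹ ≤ 1 by norm_num]
  · change (Set.projIcc 0 1 zero_le_one (2 * (1 - ‖z.1‖)) : ℝ) = 0
    rw [hz, sub_self, mul_zero, Set.projIcc_left]

end CylinderRetract

def cylInclRetractArrow (n : ℕ) :
    RetractArrow (TopCat.ofHom ⟨cylIncl n, continuous_cylIncl n⟩)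
      (TopCat.ofHom ⟨sphereIncl (n + 1), continuous_sphereIncl (n + 1)⟩) where
  i := Arrow.homMk (TopCat.ofHom (hemisphereMap n)) (TopCat.ofHom (cylinderEmbedding n))
    (by ext p; exact (cylinderEmbedding_cylIncl p).symm)
  r := Arrow.homMk (TopCat.ofHom (sphereProj n)) (TopCat.ofHom (cylinderRetraction n))
    (by ext z; exact (cylinderRetraction_sphereIncl z).symm)
  retract := by
    ext p
    · exact sphereProj_hemisphereMap p
    · exact cylinderRetraction_cylinderEmbedding p

lemma hasLiftingProperty_jFlow {X Y : DFlow} (f : X ⟶ Y) (n : ℕ)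
    [hc : HasLiftingProperty (cFlow (n + 1)) f] : HasLiftingProperty (jFlow n) f :=
  have : HasLiftingProperty (DFlow.globFunctor.map (TopCat.ofHom
      ⟨sphereIncl (n + 1), continuous_sphereIncl (n + 1)⟩)) f := hc
  ((cylInclRetractArrow n).map DFlow.globFunctor).leftLiftingProperty f

instance : IsEmpty (gSphere 0) :=
  ⟨fun z => by simpa [Subsingleton.elim z.1 0] using norm_eq_one_of_gSphere z⟩

namespace FlowHom

variable {X Y : DFlow} (f : X ⟶ Y)

lemma toFun_surjective_of_hasLiftingProperty_Cmap [hC : HasLiftingProperty Cmap f] :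
    Function.Surjective f.toFun := by
  intro y
  have sq : CommSq X.fromEmpty Cmap f (DFlow.ofSetHom fun _ => y : pointFlow ⟶ Y) :=
    ⟨DFlow.ofSet_hom_ext fun s => s.elim⟩
  obtain ⟨⟨L, -, fac_right⟩⟩ := (hC.sq_hasLift sq).exists_lift
  exact ⟨L.toFun PUnit.unit, congr_toFun fac_right PUnit.unit⟩

lemma map_surjective_of_hasLiftingProperty_cFlow_zero [hc : HasLiftingProperty (cFlow 0) f]
    (a b : X.States) :
    Function.Surjective fun p : X.Path a b => f.map p := by
  intro q
  have sq : CommSq (DFlow.globHom a b isEmptyElim (continuous_of_isEmpty inferInstance _))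
      (cFlow 0) f (DFlow.globHom (f.toFun a) (f.toFun b) (fun _ => q) continuous_const) :=
    ⟨DFlow.glob_hom_ext (fun s => by cases s <;> rfl) isEmptyElim⟩
  obtain ⟨⟨L, fac_left, fac_right⟩⟩ := (hc.sq_hasLift sq).exists_lift
  obtain rfl : L.toFun false = a := congr_toFun fac_left false
  obtain rfl : L.toFun true = b := congr_toFun fac_left true
  exact ⟨L.map (α := false) (β := true) ⟨0, Metric.mem_closedBall_self zero_le_one⟩,
    eq_of_heq (congr_map fac_right _)⟩

lemma wbarDK_of_surjective (hs : Function.Surjective f.toFun)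
    (hp : ∀ a b, Function.Surjective fun p : X.Path a b => f.map p) : WbarDK f := by
  rcases isEmpty_or_nonempty X.States with hX | ⟨⟨x⟩⟩
  · exact Or.inl ⟨hX, hs.isEmpty⟩
  by_cases hX : X.HasExecPath
  · obtain ⟨a, b, ⟨p⟩⟩ := hX
    exact Or.inr (Or.inr ⟨⟨a, b, ⟨p⟩⟩, ⟨_, _, ⟨f.map p⟩⟩⟩)
  have hXset : X.IsSetFlow := fun a b => not_nonempty_iff.mp fun hne => hX ⟨a, b, hne⟩
  refine Or.inr (Or.inl ⟨⟨x⟩, ⟨f.toFun x⟩, hXset, fun α β => ⟨fun q => ?_⟩⟩)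
  obtain ⟨a, rfl⟩ := hs α
  obtain ⟨b, rfl⟩ := hs β
  exact (hXset a b).false (hp a b q).choose

lemma hasLiftingProperty_Cplus (hs : Function.Surjective f.toFun) :
    HasLiftingProperty Cplus f where
  sq_hasLift {top bot} sq := by
    obtain ⟨x, hx⟩ := hs (bot.toFun true)
    exact ⟨⟨{ l := DFlow.ofSetHom fun s => cond s x (top.toFun PUnit.unit)
              fac_left := DFlow.ofSet_hom_ext fun _ => rfl
              fac_right := DFlow.ofSet_hom_ext fun s => by
                cases s
                exacts [congr_toFun sq.w PUnit.unit, hx] }⟩⟩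

end FlowHom

/-- every map of flows with the right lifting property with respect to
all maps of `I^gl ∪ {C}` belongs to `W̄_DK` and has the right lifting property with
respect to all maps of `{C⁺, c₀⁺} ∪ J^gl ∪ I^gl_{≥1}`:
`inj(I^gl ∪ {C}) ⊆ W̄_DK ∩ inj({C⁺, c₀⁺} ∪ J^gl ∪ I^gl_{≥1})`. -/
theorem inj_subset_Wbar_inter_inj {X Y : DFlow} (f : X ⟶ Y) (hf : rlpClass IglC f) :
    WbarDK f ∧ rlpClass TrivCofGen f := by
  have hC : HasLiftingProperty Cmap f := hf Cmap (Or.inr ⟨rfl, rfl, HEq.rfl⟩)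
  have hc (n : ℕ) : HasLiftingProperty (cFlow n) f := hf (cFlow n) (Or.inl ⟨n, rfl, rfl, HEq.rfl⟩)
  have hs := f.toFun_surjective_of_hasLiftingProperty_Cmap
  refine ⟨f.wbarDK_of_surjective hs (f.map_surjective_of_hasLiftingProperty_cFlow_zero), ?_⟩
  rintro A B i (⟨rfl, rfl, hi⟩ | ⟨rfl, rfl, hi⟩ | ⟨n, rfl, rfl, hi⟩ | ⟨n, -, rfl, rfl, hi⟩) <;>
    obtain rfl := eq_of_heq hi
  · exact f.hasLiftingProperty_Cplus hs
  · exact DFlow.hasLiftingProperty_sumMap _ _ f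
  · exact hasLiftingProperty_jFlow f n
  · exact hc n
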